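/- Let $E$ be a finite directed graph, $K$ a field, and for $e \in E^1$ define the right transduction $\tilde\delta_e \colon P_K((E)) \to P_K((E))$ by $\tilde\delta_e(\sum_\alpha \lambda_\alpha \alpha) = \sum_{\alpha : s(\alpha) = r(e)} \lambda_{e\alpha}\, \alpha$, and define $\tau_e \colon P_K((E)) \to P_K((E))$ as the composite of the augmentation map to $\prod_{v} K v$, the linear map sending $s(e) \mapsto r(e)$ and $v \mapsto 0$ for $v \ne s(e)$, and the inclusion back into $P_K((E))$. Then $\tilde\delta_e$ is a right $\tau_e$-derivation: $\tilde\delta_e(rs) = \tilde\delta_e(r)s + \tau_e(r)\tilde\delta_e(s)$ for all $r, s \in P_K((E))$. -/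

import Mathlib

/-- Coefficient functions of formal power series on the paths of a quiver. -/
abbrev SeriesCoef (V : Type*) [Quiver V] (K : Type*) := ∀ u w : V, Quiver.Path u w → K

/-- Auxiliary convolution: `conv a b γ = ∑_{γ = μ·ν} a μ * b ν`. -/
def conv {V K : Type*} [Quiver V] [Semiring K] (a : SeriesCoef V K) :
    ∀ {u w : V}, (∀ p : V, Quiver.Path p w → K) → Quiver.Path u w → K
  | u, _, b, Quiver.Path.nil => a u u Quiver.Path.nil * b u Quiver.Path.nil
  | u, w, b, Quiver.Path.cons δ e =>
      a u w (δ.cons e) * b w Quiver.Path.nil +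
        conv a (fun p ν => b p (ν.cons e)) δ

/-- The convolution product on `P_K((E))`. -/
def pmul {V K : Type*} [Quiver V] [Semiring K] (a b : SeriesCoef V K) : SeriesCoef V K :=
  fun _ w γ => conv a (fun p ν => b p w ν) γ

/-- The right transduction `δ̃ₑ` : `δ̃ₑ(∑ λ_α α) = ∑_{s(α) = r(e)} λ_{eα} α`. -/
noncomputable def transduction {V K : Type*} [Quiver V] [Semiring K] {x y : V} (e : x ⟶ y)
    (a : SeriesCoef V K) : SeriesCoef V K := fun u w γ =>
  letI := Classical.propDecidable (u = y)
  if h : u = y then a x w ((Quiver.Path.nil.cons e).comp (h ▸ γ)) else 0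

/-- The twisting endomorphism `τₑ`: the composite of the augmentation map, the linear map
sending `s(e) ↦ r(e)` and every other vertex to `0`, and the inclusion back. -/
noncomputable def tauMap {V K : Type*} [Quiver V] [Semiring K] {x y : V} (e : x ⟶ y)
    (a : SeriesCoef V K) : SeriesCoef V K := fun u w γ =>
  letI := Classical.propDecidable (u = y ∧ w = y ∧ γ.length = 0)
  if u = y ∧ w = y ∧ γ.length = 0 then a x x Quiver.Path.nil else 0

open Quiver

section

variable {V K : Type*} [Quiver V] [Semiring K]

lemma transduction_apply_self {x y : V} (e : x ⟶ y) (a : SeriesCoef V K) {w : V}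
    (γ : Path y w) : transduction e a y w γ = a x w (e.toPath.comp γ) := by
  simp [transduction, Hom.toPath]

lemma transduction_apply_of_ne {x y u w : V} (e : x ⟶ y) (a : SeriesCoef V K) (γ : Path u w)
    (hu : u ≠ y) : transduction e a u w γ = 0 := by
  simp [transduction, hu]

lemma tauMap_apply_of_ne {x y u w : V} (e : x ⟶ y) (a : SeriesCoef V K) (γ : Path u w)
    (hu : u ≠ y) : tauMap e a u w γ = 0 := by
  simp [tauMap, hu]

lemma conv_eq_mul_of_apply_eq_zero_of_length_ne_zero (a : SeriesCoef V K) {u : V}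
    (ha : ∀ (w : V) (μ : Path u w), μ.length ≠ 0 → a u w μ = 0) {w : V} (γ : Path u w)
    (b : ∀ p : V, Path p w → K) : conv a b γ = a u u Path.nil * b u γ := by
  induction γ with
  | nil => rw [conv]
  | cons δ f ih => rw [conv, ih, ha _ _ (by simp), zero_mul, zero_add]

lemma conv_tauMap {x y w : V} (e : x ⟶ y) (r : SeriesCoef V K) (γ : Path y w)
    (b : ∀ p : V, Path p w → K) : conv (tauMap e r) b γ = r x x Path.nil * b y γ := by
  rw [conv_eq_mul_of_apply_eq_zero_of_length_ne_zero _ (fun _ _ h => by simp [tauMap, h])]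
  simp [tauMap]

lemma conv_eq_zero_of_forall_apply_eq_zero (a : SeriesCoef V K) {u : V}
    (ha : ∀ (w : V) (μ : Path u w), a u w μ = 0) {w : V} (γ : Path u w)
    (b : ∀ p : V, Path p w → K) : conv a b γ = 0 := by
  rw [conv_eq_mul_of_apply_eq_zero_of_length_ne_zero a (fun _ _ _ => ha _ _), ha, zero_mul]

/-- Splitting `e·γ = μ·ν` either puts `e` at the start of `μ` or makes `μ` trivial. -/
lemma conv_toPath_comp {x y w : V} (e : x ⟶ y) (r : SeriesCoef V K) (γ : Path y w)
    (b : ∀ p : V, Path p w → K) :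
    conv r b (e.toPath.comp γ) =
      conv (transduction e r) b γ + r x x Path.nil * b x (e.toPath.comp γ) := by
  induction γ with
  | nil => simp only [Hom.toPath, Path.comp_nil, conv, transduction_apply_self]
  | cons δ f ih =>
    rw [Path.comp_cons, conv, ih, conv, transduction_apply_self, Path.comp_cons,
      add_assoc]

end

/-- the right transduction `δ̃ₑ` is a right `τₑ`-derivation on `P_K((E))`:
`δ̃ₑ(rs) = δ̃ₑ(r)s + τₑ(r)δ̃ₑ(s)`. -/
theorem stmt13 {V K : Type*} [Quiver V] [Fintype V] [∀ u w : V, Fintype (u ⟶ w)] [Field K]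
    {x y : V} (e : x ⟶ y) (r s : SeriesCoef V K) :
    transduction e (pmul r s) =
      pmul (transduction e r) s + pmul (tauMap e r) (transduction e s) := by
  funext u w γ
  simp only [Pi.add_apply, pmul]
  by_cases hu : u = y
  · subst hu
    rw [transduction_apply_self, pmul, conv_toPath_comp, conv_tauMap,
      transduction_apply_self]
  · rw [transduction_apply_of_ne e _ γ hu,
      conv_eq_zero_of_forall_apply_eq_zero _ (fun _ _ => transduction_apply_of_ne e r _ hu),
      conv_eq_zero_of_forall_apply_eq_zero _ (fun _ _ => tauMap_apply_of_ne e r _ hu), add_zero]
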